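/- arXiv:1806.08261 — 2 statements merged into one kernel-verified Lean document; each statement's English description precedes it below -/
import Mathlib

section
/- If q₁ and q₂ are distinct primes, both congruent to 3 modulo 4, then Γ(ℤ_{q₁q₂}[i]) is isomorphic to the complete bipartite graph K_{q₁²−1, q₂²−1}, and hence is neither pancyclic nor bipancyclic. -/
open SimpleGraph

/-- The set of nonzero zero-divisors of a commutative ring. -/
def zdVertex (R : Type*) [CommRing R] : Set R :=
  {x | x ≠ 0 ∧ ∃ y, y ≠ 0 ∧ x * y = 0}

/-- The zero-divisor graph `Γ(R)` of a commutative ring: vertices are the nonzero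
zero-divisors, and distinct vertices are adjacent iff their product is zero. -/
def zdGraph (R : Type*) [CommRing R] : SimpleGraph (zdVertex R) where
  Adj x y := x ≠ y ∧ (x : R) * y = 0
  symm := ⟨fun x y ⟨h1, h2⟩ => ⟨h1.symm, by rwa [mul_comm]⟩⟩
  loopless := ⟨fun x ⟨h1, _⟩ => h1 rfl⟩

/-- The ring of Gaussian integers modulo `n`, i.e. `ℤ[i]/⟨n⟩`. -/
abbrev Zi (n : ℕ) : Type := GaussianInt ⧸ Ideal.span ({(n : GaussianInt)} : Set GaussianInt)

/-- `G` contains a cycle of length `n`. -/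
def HasCycleLength {V : Type*} (G : SimpleGraph V) (n : ℕ) : Prop :=
  ∃ (a : V) (p : G.Walk a a), p.IsCycle ∧ p.length = n

/-- A graph of order `≥ 3` is pancyclic if it contains cycles of every length
from `3` to its order. -/
def Pancyclic {V : Type*} (G : SimpleGraph V) : Prop :=
  3 ≤ Nat.card V ∧ ∀ k, 3 ≤ k → k ≤ Nat.card V → HasCycleLength G k

/-- A graph is bipancyclic if it contains cycles of every even length from `4`
to its order. -/
def Bipancyclic {V : Type*} (G : SimpleGraph V) : Prop :=
  4 ≤ Nat.card V ∧ ∀ k, Even k → 4 ≤ k → k ≤ Nat.card V → HasCycleLength G k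

/-- A graph is Hamiltonian if it contains a cycle passing through every vertex. -/
def IsHamiltonianGraph {V : Type*} (G : SimpleGraph V) : Prop :=
  ∃ (a : V) (p : G.Walk a a), p.IsCycle ∧ ∀ v, v ∈ p.support

/-! For a prime `q ≡ 3 (mod 4)`, `q` stays prime in `ℤ[i]`, so `ℤ_q[i]` is a field with `q²`
elements, and by the Chinese remainder theorem `ℤ_{q₁q₂}[i] ≅ ℤ_{q₁}[i] × ℤ_{q₂}[i]`. In a product
of two domains the nonzero zero-divisors are the `(a, 0)` and `(0, b)` with `a, b ≠ 0`, and two of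
them multiply to zero iff they lie in different factors: the zero-divisor graph is
`K_{q₁²-1, q₂²-1}`. A bipartite graph has no odd cycle, so it is not pancyclic; a cycle alternates
between the two sides, so its length is at most twice the smaller side, and since
`q₁² - 1 ≠ q₂² - 1` are both even there is no cycle through all vertices, so it is not bipancyclic
either. -/

theorem HasCycleLength.map_iso {V W : Type*} {G : SimpleGraph V} {H : SimpleGraph W}
    (e : G ≃g H) {n : ℕ} (h : HasCycleLength G n) : HasCycleLength H n := by
  obtain ⟨a, p, hp, rfl⟩ := h
  exact ⟨e a, p.map e.toHom, hp.map e.injective, p.length_map _⟩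

namespace SimpleGraph

variable {V W : Type*} {G : SimpleGraph V} {H : SimpleGraph W}

theorem Iso.hasCycleLength_iff (e : G ≃g H) {n : ℕ} :
    HasCycleLength G n ↔ HasCycleLength H n :=
  ⟨.map_iso e, .map_iso e.symm⟩

theorem Iso.pancyclic_iff (e : G ≃g H) : Pancyclic G ↔ Pancyclic H := by
  simp only [Pancyclic, Nat.card_congr e.toEquiv, e.hasCycleLength_iff]

theorem Iso.bipancyclic_iff (e : G ≃g H) : Bipancyclic G ↔ Bipancyclic H := by
  simp only [Bipancyclic, Nat.card_congr e.toEquiv, e.hasCycleLength_iff]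

theorem Coloring.color_getVert_eq_iff (c : G.Coloring Bool) {u v : V} (p : G.Walk u v)
    {i : ℕ} (hi : i ≤ p.length) : c (p.getVert i) = c u ↔ Even i := by
  have := c.even_length_iff_congr (p.take i)
  rw [Walk.take_length, min_eq_left hi] at this
  rw [this, Bool.eq_iff_iff]
  exact Iff.comm

theorem Walk.IsCycle.length_le_two_mul_card_color [Finite V] (c : G.Coloring Bool) {u : V}
    {p : G.Walk u u} (hp : p.IsCycle) (b : Bool) :
    p.length ≤ 2 * Nat.card {v // c v = b} := by
  obtain ⟨k, hk⟩ : Even p.length := (c.even_length_iff_congr p).2 Iff.rfl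
  -- the vertices at positions `2 * j + r`, `j < k`, are distinct and all have colour `b`
  let r := if c u = b then 0 else 1
  have hr1 : r ≤ 1 := by simp only [r]; split_ifs <;> omega
  have hr : ∀ j < k, 2 * j + r ≤ p.length - 1 := fun j hj => by omega
  have hcolor : ∀ j < k, c (p.getVert (2 * j + r)) = b := by
    intro j hj
    have := c.color_getVert_eq_iff p (i := 2 * j + r) (by have := hr j hj; omega)
    cases hb : c (p.getVert (2 * j + r)) <;> cases b <;> cases hu : c u <;> simp_all [r]
  let f : Fin k → {v // c v = b} := fun j => ⟨p.getVert (2 * j + r), hcolor j j.2⟩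
  have hf : Function.Injective f := by
    intro i j hij
    have := hp.getVert_injOn' (hr i i.2) (hr j j.2) (congrArg Subtype.val hij)
    exact Fin.ext (by omega)
  have := Nat.card_le_card_of_injective f hf
  simp only [Nat.card_eq_fintype_card, Fintype.card_fin] at this
  omega

section Bipartite

variable {α β : Type*}

theorem not_hasCycleLength_completeBipartiteGraph_of_odd {n : ℕ} (hn : Odd n) :
    ¬ HasCycleLength (completeBipartiteGraph α β) n := by
  rintro ⟨a, p, -, rfl⟩
  exact Nat.not_even_iff_odd.2 hn
    (((CompleteBipartiteGraph.bicoloring α β).even_length_iff_congr p).2 Iff.rfl)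

theorem Walk.IsCycle.length_le_two_mul_card_left [Finite α] [Finite β] {u : α ⊕ β}
    {p : (completeBipartiteGraph α β).Walk u u} (hp : p.IsCycle) :
    p.length ≤ 2 * Nat.card α := by
  have hcard : Nat.card {v // CompleteBipartiteGraph.bicoloring α β v = false} = Nat.card α :=
    Nat.card_congr <| (Equiv.subtypeEquivRight fun _ => Sum.isRight_eq_false).trans
      Equiv.sumIsLeft
  simpa [hcard] using hp.length_le_two_mul_card_color (CompleteBipartiteGraph.bicoloring α β) false

theorem Walk.IsCycle.length_le_two_mul_card_right [Finite α] [Finite β] {u : α ⊕ β}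
    {p : (completeBipartiteGraph α β).Walk u u} (hp : p.IsCycle) :
    p.length ≤ 2 * Nat.card β := by
  have hcard : Nat.card {v // CompleteBipartiteGraph.bicoloring α β v = true} = Nat.card β :=
    Nat.card_congr Equiv.sumIsRight
  simpa [hcard] using hp.length_le_two_mul_card_color (CompleteBipartiteGraph.bicoloring α β) true

end Bipartite

end SimpleGraph

open SimpleGraph

theorem completeBipartiteGraph_not_pancyclic {α β : Type*} :
    ¬ Pancyclic (completeBipartiteGraph α β) := fun h =>
  not_hasCycleLength_completeBipartiteGraph_of_odd (by decide) (h.2 3 le_rfl h.1)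

theorem completeBipartiteGraph_not_bipancyclic {α β : Type*} [Finite α] [Finite β]
    (hne : Nat.card α ≠ Nat.card β) (heven : Even (Nat.card α + Nat.card β)) :
    ¬ Bipancyclic (completeBipartiteGraph α β) := by
  rintro ⟨h4, hcycle⟩
  rw [Nat.card_sum] at h4 hcycle
  obtain ⟨u, p, hp, hlen⟩ := hcycle _ heven h4 le_rfl
  have := hp.length_le_two_mul_card_left
  have := hp.length_le_two_mul_card_right
  omega

section ZeroDivisorGraph
variable {R S : Type*} [CommRing R] [CommRing S]

theorem map_mem_zdVertex_of_injective (f : R →+* S) (hf : Function.Injective f) {x : R}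
    (hx : x ∈ zdVertex R) : f x ∈ zdVertex S := by
  obtain ⟨hx0, y, hy0, hxy⟩ := hx
  exact ⟨(map_ne_zero_iff f hf).2 hx0, f y, (map_ne_zero_iff f hf).2 hy0,
    by rw [← map_mul, hxy, map_zero]⟩

theorem RingEquiv.map_mem_zdVertex_iff (e : R ≃+* S) {x : R} :
    e x ∈ zdVertex S ↔ x ∈ zdVertex R :=
  ⟨fun h => by simpa using map_mem_zdVertex_of_injective e.symm.toRingHom e.symm.injective h,
    map_mem_zdVertex_of_injective e.toRingHom e.injective⟩

def zdGraphCongr (e : R ≃+* S) : zdGraph R ≃g zdGraph S where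
  toEquiv := e.toEquiv.subtypeEquiv fun _ => e.map_mem_zdVertex_iff.symm
  map_rel_iff' := by simp [zdGraph, ← map_mul, Subtype.ext_iff]

variable [IsDomain R] [IsDomain S]

theorem mem_zdVertex_prod {x : R × S} :
    x ∈ zdVertex (R × S) ↔ (x.1 ≠ 0 ∧ x.2 = 0) ∨ (x.1 = 0 ∧ x.2 ≠ 0) := by
  constructor
  · rintro ⟨hx, y, hy, hxy⟩
    have h₁ : x.1 * y.1 = 0 := congrArg Prod.fst hxy
    have h₂ : x.2 * y.2 = 0 := congrArg Prod.snd hxy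
    simp only [ne_eq, Prod.ext_iff, Prod.fst_zero, Prod.snd_zero, mul_eq_zero] at hx hy h₁ h₂
    tauto
  · rintro (⟨h₁, h₂⟩ | ⟨h₁, h₂⟩)
    · exact ⟨fun h => h₁ (congrArg Prod.fst h), (0, 1), by simp, by simp [Prod.ext_iff, h₂]⟩
    · exact ⟨fun h => h₂ (congrArg Prod.snd h), (1, 0), by simp, by simp [Prod.ext_iff, h₁]⟩

def nonzeroSumToZdVertex : {a : R // a ≠ 0} ⊕ {b : S // b ≠ 0} → zdVertex (R × S) :=
  Sum.elim (fun a => ⟨(a, 0), mem_zdVertex_prod.2 (.inl ⟨a.2, rfl⟩)⟩)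
    (fun b => ⟨(0, b), mem_zdVertex_prod.2 (.inr ⟨rfl, b.2⟩)⟩)

theorem nonzeroSumToZdVertex_bijective :
    Function.Bijective (nonzeroSumToZdVertex (R := R) (S := S)) := by
  constructor
  · rintro (⟨a, ha⟩ | ⟨b, hb⟩) (⟨a', ha'⟩ | ⟨b', hb'⟩) h <;>
      simp_all [nonzeroSumToZdVertex, Subtype.ext_iff, Prod.ext_iff]
  · rintro ⟨x, hx⟩
    rcases mem_zdVertex_prod.1 hx with ⟨h₁, h₂⟩ | ⟨h₁, h₂⟩
    · exact ⟨.inl ⟨x.1, h₁⟩, Subtype.ext (Prod.ext rfl h₂.symm)⟩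
    · exact ⟨.inr ⟨x.2, h₂⟩, Subtype.ext (Prod.ext h₁.symm rfl)⟩

noncomputable def completeBipartiteGraphIsoZdGraphProd :
    completeBipartiteGraph {a : R // a ≠ 0} {b : S // b ≠ 0} ≃g zdGraph (R × S) where
  toEquiv := Equiv.ofBijective _ nonzeroSumToZdVertex_bijective
  map_rel_iff' := by
    rintro (⟨a, ha⟩ | ⟨b, hb⟩) (⟨a', ha'⟩ | ⟨b', hb'⟩) <;>
      simp_all [zdGraph, nonzeroSumToZdVertex, Prod.ext_iff]

end ZeroDivisorGraph

theorem Nat.card_subtype_ne {α : Type*} [Finite α] (a : α) :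
    Nat.card {x // x ≠ a} = Nat.card α - 1 := by
  classical
  rw [← Nat.card_congr (Equiv.optionSubtypeNe a), Finite.card_option, Nat.add_sub_cancel]

def GaussianInt.reImModHom (n : ℕ) : GaussianInt →+ ZMod n × ZMod n where
  toFun z := (z.re, z.im)
  map_zero' := by simp
  map_add' _ _ := by simp

theorem card_zi (n : ℕ) : Nat.card (Zi n) = n ^ 2 := by
  let f := GaussianInt.reImModHom n
  have hker : f.ker = (Ideal.span {(n : GaussianInt)}).toAddSubgroup := by
    ext z
    rw [Submodule.mem_toAddSubgroup, Ideal.mem_span_singleton,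
      show (n : GaussianInt) = ((n : ℤ) : GaussianInt) by simp, Zsqrtd.intCast_dvd]
    simp [f, GaussianInt.reImModHom, ZMod.intCast_zmod_eq_zero_iff_dvd]
  have hsurj : Function.Surjective f := by
    rintro ⟨a, b⟩
    obtain ⟨a, rfl⟩ := ZMod.intCast_surjective a
    obtain ⟨b, rfl⟩ := ZMod.intCast_surjective b
    exact ⟨⟨a, b⟩, rfl⟩
  calc Nat.card (Zi n) = f.ker.index := by rw [hker]; rfl
    _ = n ^ 2 := by
      rw [AddSubgroup.index_ker, AddMonoidHom.range_eq_top.2 hsurj, AddSubgroup.card_top,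
        Nat.card_prod, Nat.card_zmod, sq]

theorem isDomain_zi {q : ℕ} (hq : q.Prime) (h3 : q % 4 = 3) : IsDomain (Zi q) := by
  have : Fact q.Prime := ⟨hq⟩
  have hp : Prime (q : GaussianInt) := GaussianInt.prime_of_nat_prime_of_mod_four_eq_three q h3
  have := (Ideal.span_singleton_prime hp.ne_zero).2 hp
  exact Ideal.Quotient.isDomain _

noncomputable def ziMulEquiv {m n : ℕ} (h : m.Coprime n) : Zi (m * n) ≃+* Zi m × Zi n :=
  (Ideal.quotEquivOfEq (by rw [Ideal.span_singleton_mul_span_singleton, Nat.cast_mul])).trans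
    (Ideal.quotientMulEquivQuotientProd _ _ ((Ideal.isCoprime_span_singleton_iff _ _).2 h.cast))

theorem finite_zi {n : ℕ} (hn : n ≠ 0) : Finite (Zi n) :=
  Nat.finite_of_card_ne_zero (by rw [card_zi]; positivity)

theorem stmt7 (q₁ q₂ : ℕ) (hq₁ : q₁.Prime) (hq₂ : q₂.Prime) (hne : q₁ ≠ q₂)
    (h₁ : q₁ % 4 = 3) (h₂ : q₂ % 4 = 3) :
    Nonempty (zdGraph (Zi (q₁ * q₂)) ≃g
      completeBipartiteGraph (Fin (q₁ ^ 2 - 1)) (Fin (q₂ ^ 2 - 1))) ∧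
    ¬ Pancyclic (zdGraph (Zi (q₁ * q₂))) ∧ ¬ Bipancyclic (zdGraph (Zi (q₁ * q₂))) := by
  have := isDomain_zi hq₁ h₁
  have := isDomain_zi hq₂ h₂
  have := finite_zi hq₁.ne_zero
  have := finite_zi hq₂.ne_zero
  have hcard (q : ℕ) [Finite (Zi q)] : Nat.card {a : Zi q // a ≠ 0} = q ^ 2 - 1 := by
    rw [Nat.card_subtype_ne, card_zi]
  let Φ : zdGraph (Zi (q₁ * q₂)) ≃g completeBipartiteGraph (Fin (q₁ ^ 2 - 1)) (Fin (q₂ ^ 2 - 1)) :=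
    (zdGraphCongr (ziMulEquiv ((Nat.coprime_primes hq₁ hq₂).2 hne))).trans <|
      completeBipartiteGraphIsoZdGraphProd.symm.trans <| completeBipartiteGraphCongr
        (Finite.equivFinOfCardEq (hcard q₁)) (Finite.equivFinOfCardEq (hcard q₂))
  refine ⟨⟨Φ⟩, Φ.pancyclic_iff.not.2 completeBipartiteGraph_not_pancyclic,
    Φ.bipancyclic_iff.not.2 (completeBipartiteGraph_not_bipancyclic ?_ ?_)⟩
  all_goals simp only [Nat.card_fin]
  · exact fun h => hne <| Nat.pow_left_injective two_ne_zero <|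
      Nat.sub_one_cancel (pow_pos hq₁.pos 2) (pow_pos hq₂.pos 2) h
  · have hodd {q : ℕ} (hq : q.Prime) (h3 : q % 4 = 3) : Odd (q ^ 2) :=
      (hq.odd_of_ne_two (by omega)).pow
    exact (Nat.Odd.sub_odd (hodd hq₁ h₁) odd_one).add (Nat.Odd.sub_odd (hodd hq₂ h₂) odd_one)
end

section
/- For a prime p ≥ 5 and integer m ≥ 1, the zero-divisor graph Γ(ℤ_{p^m}) is pancyclic if and only if m = 2. -/
open SimpleGraph

/-!
In `ℤ/p^m` the nonzero zero-divisors are the nonzero multiples of `p`, so `Γ(ℤ/p^m)` has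
`p^(m-1) - 1` vertices. For `m = 1` there are none; for `m = 2` any two multiples of `p` multiply
to `0`, so the graph is complete on `p - 1 ≥ 4` vertices and has cycles of every length. For
`m ≥ 3` the `p^(m-1) - p^(m-2)` vertices of `p`-adic valuation one are pairwise non-adjacent
(their products have valuation `2 < m`). They are more than half of all vertices, but along a
Hamiltonian path no two of them can be consecutive, so there is no Hamiltonian cycle.
-/

theorem List.IsChain.two_mul_countP_le {α : Type*} {R : α → α → Prop} {P : α → Bool}
    (hP : ∀ x y, R x y → P x → P y → False) :
    ∀ {l : List α}, l.IsChain R → 2 * l.countP P ≤ l.length + 1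
  | [], _ => by simp
  | [x], _ => by simp only [List.countP_singleton, List.length_singleton]; split <;> omega
  | x :: y :: l, h => by
    obtain ⟨hxy, h⟩ := List.isChain_cons_cons.mp h
    cases hx : P x
    · have := h.two_mul_countP_le hP
      simp only [List.countP_cons, hx, List.length_cons, Bool.false_eq_true, if_false] at this ⊢
      omega
    · have hy : P y = false := Bool.eq_false_iff.mpr (hP x y hxy hx)
      have := h.tail.two_mul_countP_le hP
      simp only [List.countP_cons, hx, hy, List.length_cons, List.tail_cons, Bool.false_eq_true,
        if_false, if_true] at this ⊢
      omega

namespace SimpleGraph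

variable {V : Type*} {G : SimpleGraph V}

theorem Walk.IsHamiltonian.two_mul_ncard_le_of_isIndepSet [Fintype V] [DecidableEq V]
    {u v : V} {q : G.Walk u v} (hq : q.IsHamiltonian) {s : Set V} (hs : G.IsIndepSet s) :
    2 * s.ncard ≤ Fintype.card V + 1 := by
  classical
  have hcount : s.ncard ≤ q.support.countP (fun x => decide (x ∈ s)) := calc
    s.ncard ≤ (q.support.filter (fun x => decide (x ∈ s))).toFinset.card := by
      rw [← Set.ncard_coe_finset]
      exact Set.ncard_le_ncard (fun x hx => by simpa [hx] using hq.mem_support x)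
    _ ≤ q.support.countP (fun x => decide (x ∈ s)) := by
      rw [List.countP_eq_length_filter]; exact List.toFinset_card_le _
  have hchain := q.isChain_adj_support.two_mul_countP_le (P := fun x => decide (x ∈ s))
    (fun x y hxy hx hy => hs (by simpa using hx) (by simpa using hy) (G.ne_of_adj hxy) hxy)
  rw [hq.length_support] at hchain
  omega

theorem hasCycleLength_top [Finite V] {k : ℕ} (h3 : 3 ≤ k) (hk : k ≤ Nat.card V) :
    HasCycleLength (⊤ : SimpleGraph V) k := by
  have := Fintype.ofFinite V
  obtain ⟨f⟩ : Nonempty (Fin k ↪ V) :=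
    Function.Embedding.nonempty_of_card_le (by simpa [Nat.card_eq_fintype_card] using hk)
  exact (cycleGraph_isContained_iff h3).mp (isContained_top_iff.mpr ⟨f⟩)

theorem pancyclic_top [Finite V] (h : 3 ≤ Nat.card V) : Pancyclic (⊤ : SimpleGraph V) :=
  ⟨h, fun _ h3 hk => hasCycleLength_top h3 hk⟩

theorem HasCycleLength.two_mul_ncard_le_of_isIndepSet [Finite V]
    (hc : HasCycleLength G (Nat.card V)) {s : Set V} (hs : G.IsIndepSet s) :
    2 * s.ncard ≤ Nat.card V + 1 := by
  classical
  have := Fintype.ofFinite V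
  obtain ⟨a, c, hc, hlen⟩ := hc
  rw [Nat.card_eq_fintype_card] at hlen ⊢
  exact (Walk.isHamiltonianCycle_iff_isCycle_and_length_eq.mpr ⟨hc, hlen⟩).isHamiltonian_tail
    |>.two_mul_ncard_le_of_isIndepSet hs

end SimpleGraph

theorem mem_zdVertex_iff_of_finite {R : Type*} [CommRing R] [Finite R] {x : R} :
    x ∈ zdVertex R ↔ x ≠ 0 ∧ ¬IsUnit x := by
  simp [zdVertex, isUnit_iff_mem_nonZeroDivisors_of_finite, mem_nonZeroDivisors_iff_right,
    mul_comm x, and_comm]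

theorem ZMod.mul_eq_zero_iff_dvd_val_mul {n : ℕ} [NeZero n] {x y : ZMod n} :
    x * y = 0 ↔ n ∣ x.val * y.val := by
  rw [← ZMod.natCast_eq_zero_iff, Nat.cast_mul, ZMod.natCast_zmod_val, ZMod.natCast_zmod_val]

theorem ZMod.ncard_setOf_dvd_val {n d : ℕ} [NeZero n] (hd : d ∣ n) :
    {x : ZMod n | d ∣ x.val}.ncard = n / d := by
  obtain ⟨q, rfl⟩ := hd
  have hd : 0 < d := Nat.pos_of_ne_zero (left_ne_zero_of_mul (NeZero.ne (d * q)))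
  have hval (k : Fin q) : ((d * k : ℕ) : ZMod (d * q)).val = d * k :=
    ZMod.val_cast_of_lt (Nat.mul_lt_mul_of_pos_left k.isLt hd)
  have hrange : {x : ZMod (d * q) | d ∣ x.val}
      = Set.range fun k : Fin q => ((d * k : ℕ) : ZMod (d * q)) := by
    ext x
    refine ⟨fun ⟨k, hk⟩ => ⟨⟨k, ?_⟩, ?_⟩, ?_⟩
    · exact lt_of_mul_lt_mul_left (hk ▸ x.val_lt) hd.le
    · simp [← hk]
    · rintro ⟨k, rfl⟩
      exact ⟨k, hval k⟩
  rw [hrange, Set.ncard_range_of_injective, Nat.card_fin, Nat.mul_div_cancel_left _ hd]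
  intro j k hjk
  have := congrArg ZMod.val hjk
  rw [hval, hval] at this
  exact Fin.ext (Nat.eq_of_mul_eq_mul_left hd this)

theorem Nat.Prime.not_pow_three_dvd_mul {p a b : ℕ} (hp : p.Prime) (ha : p ∣ a)
    (ha' : ¬p ^ 2 ∣ a) (hb : p ∣ b) (hb' : ¬p ^ 2 ∣ b) : ¬p ^ 3 ∣ a * b := by
  obtain ⟨a, rfl⟩ := ha
  obtain ⟨b, rfl⟩ := hb
  rw [pow_two, Nat.mul_dvd_mul_iff_left hp.pos] at ha' hb'
  intro h
  rw [show p * a * (p * b) = p ^ 2 * (a * b) by ring, pow_succ,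
    Nat.mul_dvd_mul_iff_left (pow_pos hp.pos 2)] at h
  exact (hp.dvd_mul.mp h).elim ha' hb'

theorem Nat.pow_div_self {p m : ℕ} (hp : 0 < p) (hm : 0 < m) : p ^ m / p = p ^ (m - 1) := by
  simpa using Nat.pow_div hm hp

section PrimePower

variable {p m : ℕ}

theorem zdVertex_zmod_prime_pow (hp : p.Prime) (hm : 0 < m) :
    zdVertex (ZMod (p ^ m)) = {x | p ∣ x.val} \ {0} := by
  have : NeZero (p ^ m) := ⟨pow_ne_zero _ hp.ne_zero⟩
  ext x
  rw [mem_zdVertex_iff_of_finite, ← ZMod.natCast_zmod_val x,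
    ZMod.isUnit_natCast_iff_not_dvd_pow hp hm, ZMod.natCast_zmod_val]
  simp [and_comm]

theorem card_zdVertex_zmod_prime_pow (hp : p.Prime) (hm : 0 < m) :
    Nat.card (zdVertex (ZMod (p ^ m))) = p ^ (m - 1) - 1 := by
  have : NeZero (p ^ m) := ⟨pow_ne_zero _ hp.ne_zero⟩
  rw [Nat.card_coe_set_eq, zdVertex_zmod_prime_pow hp hm,
    Set.ncard_sdiff_singleton_of_mem (by simp), ZMod.ncard_setOf_dvd_val (dvd_pow_self p hm.ne'),
    Nat.pow_div_self hp.pos hm]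

theorem zdGraph_zmod_prime_sq_eq_top (hp : p.Prime) : zdGraph (ZMod (p ^ 2)) = ⊤ := by
  have : NeZero (p ^ 2) := ⟨pow_ne_zero _ hp.ne_zero⟩
  ext ⟨x, hx⟩ ⟨y, hy⟩
  rw [zdVertex_zmod_prime_pow hp two_pos] at hx hy
  refine ⟨fun h => h.1, fun h => ⟨h, ?_⟩⟩
  exact ZMod.mul_eq_zero_iff_dvd_val_mul.mpr
    ((dvd_of_eq (pow_two p)).trans (mul_dvd_mul hx.1 hy.1))

theorem isIndepSet_zdGraph_setOf_not_sq_dvd (hp : p.Prime) (hm : 3 ≤ m) :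
    (zdGraph (ZMod (p ^ m))).IsIndepSet {x | ¬p ^ 2 ∣ (x : ZMod (p ^ m)).val} := by
  have : NeZero (p ^ m) := ⟨pow_ne_zero _ hp.ne_zero⟩
  rintro ⟨x, hx⟩ hx' ⟨y, hy⟩ hy' - ⟨-, hxy⟩
  rw [zdVertex_zmod_prime_pow hp (by omega)] at hx hy
  exact hp.not_pow_three_dvd_mul hx.1 hx' hy.1 hy'
    ((pow_dvd_pow p hm).trans (ZMod.mul_eq_zero_iff_dvd_val_mul.mp hxy))

theorem ncard_setOf_not_sq_dvd_zdVertex_zmod_prime_pow (hp : p.Prime) (hm : 2 ≤ m) :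
    {x : zdVertex (ZMod (p ^ m)) | ¬p ^ 2 ∣ (x : ZMod (p ^ m)).val}.ncard
      = p ^ (m - 1) - p ^ (m - 2) := by
  have : NeZero (p ^ m) := ⟨pow_ne_zero _ hp.ne_zero⟩
  have hsq : p ^ 2 ∣ p ^ m := pow_dvd_pow p hm
  rw [← Set.ncard_image_of_injective _ Subtype.val_injective]
  have himage : Subtype.val '' {x : zdVertex (ZMod (p ^ m)) | ¬p ^ 2 ∣ (x : ZMod (p ^ m)).val}
      = {x : ZMod (p ^ m) | p ∣ x.val} \ {x | p ^ 2 ∣ x.val} := by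
    ext x
    simp only [Set.mem_image, Set.mem_ofPred_eq, Subtype.exists,
      zdVertex_zmod_prime_pow hp (by omega : 0 < m), Set.mem_sdiff, Set.mem_singleton_iff,
      exists_and_left, exists_prop, exists_eq_right_right]
    exact ⟨fun ⟨h, h', _⟩ => ⟨h', h⟩, fun ⟨h', h⟩ => ⟨h, h', by rintro rfl; simp at h⟩⟩
  have hsub : {x : ZMod (p ^ m) | p ^ 2 ∣ x.val} ⊆ {x | p ∣ x.val} :=
    fun x hx => (dvd_pow_self p two_ne_zero).trans hx
  rw [himage, Set.ncard_sdiff hsub, ZMod.ncard_setOf_dvd_val (dvd_pow_self p (by omega)),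
    ZMod.ncard_setOf_dvd_val hsq, Nat.pow_div_self hp.pos (by omega), Nat.pow_div hm hp.pos]

end PrimePower

theorem stmt11 (p m : ℕ) (hp : p.Prime) (hp5 : 5 ≤ p) (hm : 1 ≤ m) :
    Pancyclic (zdGraph (ZMod (p ^ m))) ↔ m = 2 := by
  have : NeZero (p ^ m) := ⟨pow_ne_zero _ hp.ne_zero⟩
  have hV := card_zdVertex_zmod_prime_pow hp hm
  constructor
  · rintro ⟨hV3, hcycles⟩
    have hm2 : 2 ≤ m := by
      by_contra!
      obtain rfl : m = 1 := by omega
      simp [hV] at hV3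
    by_contra hm_ne
    have hindep := (hcycles _ hV3 le_rfl).two_mul_ncard_le_of_isIndepSet
      (isIndepSet_zdGraph_setOf_not_sq_dvd hp (by omega))
    rw [ncard_setOf_not_sq_dvd_zdVertex_zmod_prime_pow hp hm2, hV] at hindep
    have hpow : p ^ (m - 1) = p * p ^ (m - 2) := by rw [← pow_succ']; congr 1; omega
    have hp5' : 5 * p ^ (m - 2) ≤ p * p ^ (m - 2) := Nat.mul_le_mul_right _ hp5
    have := Nat.one_le_pow (m - 2) p hp.pos
    omega
  · rintro rfl
    rw [zdGraph_zmod_prime_sq_eq_top hp]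
    exact pancyclic_top (by rw [hV, Nat.add_one_sub_one, pow_one]; omega)
end
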